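/- arXiv:math-ph/0308012 — 4 statements merged into one kernel-verified Lean document; each statement's English description precedes it below -/
import Mathlib

section
/- Let n ≥ 1 and let a, b, c, d be n×n real matrices satisfying cᵀa = aᵀc and dᵀb = bᵀd, and suppose that W = dᵀa − bᵀc is invertible. Let W̃ be the 2n×2n block matrix [[a, b],[c, d]]. Then W̃ is invertible and W̃ · [[0, W⁻¹],[−(Wᵀ)⁻¹, 0]] · W̃ᵀ = −J. -/
/-!
Writing `X = [[a, b], [c, d]]`, the symmetry hypotheses say exactly that
`Xᵀ J X = [[0, -Wᵀ], [W, 0]]`, and the middle factor `[[0, W⁻¹], [-(Wᵀ)⁻¹, 0]]` is the inverse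
of this matrix. Hence `X` is invertible, and
`X (Xᵀ J X)⁻¹ Xᵀ = X X⁻¹ J⁻¹ (Xᵀ)⁻¹ Xᵀ = J⁻¹ = -J`.
-/

open Matrix

/-- The standard symplectic matrix `J = [[0, -I],[I, 0]]` of size `2n × 2n`. -/
def symplJ (n : ℕ) : Matrix (Fin n ⊕ Fin n) (Fin n ⊕ Fin n) ℝ :=
  Matrix.fromBlocks 0 (-1) 1 0

namespace Matrix

variable {ι R : Type*} [Fintype ι] [DecidableEq ι] [CommRing R]

theorem isUnit_of_isUnit_transpose_mul_mul {X J : Matrix ι ι R} (h : IsUnit (Xᵀ * J * X)) :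
    IsUnit X := by
  rw [isUnit_iff_isUnit_det] at h ⊢
  rw [det_mul, det_mul, det_transpose] at h
  exact isUnit_of_mul_isUnit_right h

theorem mul_inv_transpose_mul_mul_mul_transpose {X : Matrix ι ι R} (J : Matrix ι ι R)
    (hX : IsUnit X) : X * (Xᵀ * J * X)⁻¹ * Xᵀ = J⁻¹ := by
  have hXdet : IsUnit X.det := (isUnit_iff_isUnit_det X).mp hX
  rw [mul_inv_rev, mul_inv_rev, mul_nonsing_inv_cancel_left X _ hXdet,
    nonsing_inv_mul_cancel_right Xᵀ J⁻¹ (isUnit_det_transpose X hXdet)]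

theorem fromBlocks_zero_neg_transpose_mul_fromBlocks_zero_inv {W : Matrix ι ι R}
    (hW : IsUnit W) :
    fromBlocks 0 (-Wᵀ) W 0 * fromBlocks 0 W⁻¹ (-(Wᵀ)⁻¹) 0 = 1 := by
  have hWdet : IsUnit W.det := (isUnit_iff_isUnit_det W).mp hW
  rw [fromBlocks_multiply, ← fromBlocks_one]
  simp [mul_nonsing_inv _ hWdet, mul_nonsing_inv _ (isUnit_det_transpose W hWdet)]

end Matrix

theorem inv_symplJ (n : ℕ) : (symplJ n)⁻¹ = -symplJ n :=
  inv_eq_right_inv <| by simp [symplJ, fromBlocks_neg, fromBlocks_multiply, ← fromBlocks_one]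

theorem fromBlocks_transpose_mul_symplJ_mul_fromBlocks {n : ℕ}
    (a b c d : Matrix (Fin n) (Fin n) ℝ) :
    (fromBlocks a b c d)ᵀ * symplJ n * fromBlocks a b c d =
      fromBlocks (cᵀ * a - aᵀ * c) (cᵀ * b - aᵀ * d) (dᵀ * a - bᵀ * c) (dᵀ * b - bᵀ * d) := by
  simp only [symplJ, fromBlocks_transpose, fromBlocks_multiply]
  simp [sub_eq_neg_add, add_comm]

theorem wronskian_block_inverse_identity_general (n : ℕ)
    (a b c d : Matrix (Fin n) (Fin n) ℝ)
    (hac : cᵀ * a = aᵀ * c) (hbd : dᵀ * b = bᵀ * d)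
    (W : Matrix (Fin n) (Fin n) ℝ) (hW : W = dᵀ * a - bᵀ * c)
    (hWinv : IsUnit W)
    (Wtilde : Matrix (Fin n ⊕ Fin n) (Fin n ⊕ Fin n) ℝ)
    (hWtilde : Wtilde = Matrix.fromBlocks a b c d) :
    IsUnit Wtilde ∧
      Wtilde * Matrix.fromBlocks 0 W⁻¹ (-(Wᵀ)⁻¹) 0 * Wtildeᵀ = -(symplJ n) := by
  have hS : Wtildeᵀ * symplJ n * Wtilde = fromBlocks 0 (-Wᵀ) W 0 := by
    rw [hWtilde, fromBlocks_transpose_mul_symplJ_mul_fromBlocks, hac, hbd, sub_self, sub_self,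
      hW, transpose_sub, transpose_mul, transpose_mul, transpose_transpose, transpose_transpose,
      neg_sub]
  have hSM := fromBlocks_zero_neg_transpose_mul_fromBlocks_zero_inv hWinv
  rw [← hS] at hSM
  have hWtilde_unit : IsUnit Wtilde := isUnit_of_isUnit_transpose_mul_mul <|
    (isUnit_iff_isUnit_det _).mpr (isUnit_det_of_right_inverse hSM)
  refine ⟨hWtilde_unit, ?_⟩
  rw [← inv_eq_right_inv hSM, mul_inv_transpose_mul_mul_mul_transpose _ hWtilde_unit, inv_symplJ]

/-- if `cᵀa = aᵀc`, `dᵀb = bᵀd` and `W = dᵀa - bᵀc` is invertible, then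
`W̃ = [[a, b],[c, d]]` is invertible and `W̃ [[0, W⁻¹],[-(Wᵀ)⁻¹, 0]] W̃ᵀ = -J`. -/
theorem wronskian_block_inverse_identity (n : ℕ) (hn : 1 ≤ n)
    (a b c d : Matrix (Fin n) (Fin n) ℝ)
    (hac : cᵀ * a = aᵀ * c) (hbd : dᵀ * b = bᵀ * d)
    (W : Matrix (Fin n) (Fin n) ℝ) (hW : W = dᵀ * a - bᵀ * c)
    (hWinv : IsUnit W)
    (Wtilde : Matrix (Fin n ⊕ Fin n) (Fin n ⊕ Fin n) ℝ)
    (hWtilde : Wtilde = Matrix.fromBlocks a b c d) :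
    IsUnit Wtilde ∧
      Wtilde * Matrix.fromBlocks 0 W⁻¹ (-(Wᵀ)⁻¹) 0 * Wtildeᵀ = -(symplJ n) :=
  wronskian_block_inverse_identity_general n a b c d hac hbd W hW hWinv Wtilde hWtilde
end

section
/- Let n ≥ 1 and let v : ℝ → Mₙ(ℝ) be measurable with v(x) symmetric for every x, satisfying the Birman condition: there is c₀ < ∞ with ∫_x^{x+1} ‖v(z)‖ dz ≤ c₀ for all x ≥ 0. Then with Λ₀ = −(1 + c₀)², for every continuously differentiable compactly supported function φ : [0,∞) → ℝⁿ one has ∫₀^∞ ( |φ′(x)|² + (v(x)φ(x), φ(x)) ) dx ≥ Λ₀ ∫₀^∞ |φ(x)|² dx; i.e. the quadratic form of the Schrödinger operator H = −d²/dx² + v is bounded below. -/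
open Matrix MeasureTheory
open scoped Matrix.Norms.L2Operator

open Set intervalIntegral
open scoped RealInnerProductSpace

/-!
On a unit interval `[a, a + 1]`, the fundamental theorem of calculus for `‖φ‖²`, averaged over
the interval, gives `sup ‖φ‖² ≤ ∫ ‖φ‖² + 2 ∫ ‖φ'‖ ‖φ‖`. Since `|(v φ, φ)| ≤ ‖v‖ ‖φ‖²`, the Birman
condition then bounds `∫_k^{k+1} (v φ, φ)` below by `-c₀ (∫ ‖φ‖² + 2 ∫ ‖φ'‖ ‖φ‖)` on each
`[k, k + 1]`. Summing over `k` and absorbing `2 c₀ ‖φ'‖ ‖φ‖ ≤ ‖φ'‖² + c₀² ‖φ‖²` leaves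
`-(c₀² + c₀) ∫ ‖φ‖² ≥ -(1 + c₀)² ∫ ‖φ‖²`.
-/

theorem Matrix.abs_mulVec_dotProduct_le {m n : Type*} [Fintype m] [Fintype n] [DecidableEq n]
    (A : Matrix m n ℝ) (x : EuclideanSpace ℝ n) (y : EuclideanSpace ℝ m) :
    |A *ᵥ x ⬝ᵥ y| ≤ ‖A‖ * ‖x‖ * ‖y‖ := by
  have h_inner : A *ᵥ x ⬝ᵥ y = ⟪(EuclideanSpace.equiv m ℝ).symm (A *ᵥ x), y⟫ := by
    rw [EuclideanSpace.inner_eq_star_dotProduct, dotProduct_comm]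
    rfl
  rw [h_inner]
  calc _ ≤ ‖(EuclideanSpace.equiv m ℝ).symm (A *ᵥ x)‖ * ‖y‖ := abs_real_inner_le_norm _ _
    _ ≤ ‖A‖ * ‖x‖ * ‖y‖ := by gcongr; exact A.l2_opNorm_mulVec x

theorem Matrix.measurable_mulVec_dotProduct {α m n : Type*} [MeasurableSpace α]
    [Fintype m] [Fintype n] {A : α → Matrix m n ℝ} {x : α → n → ℝ} {y : α → m → ℝ}
    (hA : ∀ i j, Measurable fun a => A a i j) (hx : ∀ j, Measurable fun a => x a j)
    (hy : ∀ i, Measurable fun a => y a i) :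
    Measurable fun a => A a *ᵥ x a ⬝ᵥ y a := by
  simp only [dotProduct, mulVec]
  exact Finset.measurable_sum _ fun i _ =>
    (Finset.measurable_sum _ fun j _ => (hA i j).mul (hx j)).mul (hy i)

theorem HasCompactSupport.eventually_forall_ge_eq_zero {E : Type*} [Zero E] {f : ℝ → E}
    (hf : HasCompactSupport f) : ∀ᶠ N : ℕ in Filter.atTop, ∀ x : ℝ, (N : ℝ) ≤ x → f x = 0 := by
  obtain ⟨R, -, hR⟩ := hf.exists_pos_le_norm
  refine Filter.eventually_atTop.2 ⟨⌈R⌉₊, fun N hN x hx => hR x ?_⟩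
  calc R ≤ N := (Nat.le_ceil R).trans (Nat.cast_le.2 hN)
    _ ≤ ‖x‖ := hx.trans (Real.le_norm_self x)

theorem setIntegral_Ioi_eq_intervalIntegral_of_forall_ge {E : Type*} [NormedAddCommGroup E]
    [NormedSpace ℝ E] {f : ℝ → E} {a b : ℝ} (hab : a ≤ b) (hf : ∀ x, b ≤ x → f x = 0) :
    ∫ x in Ioi a, f x = ∫ x in a..b, f x := by
  rw [integral_of_le hab]
  refine setIntegral_eq_of_subset_of_ae_sdiff_eq_zero measurableSet_Ioi.nullMeasurableSet
    Ioc_subset_Ioi_self (Filter.Eventually.of_forall fun x ⟨hax, hxb⟩ => hf x ?_)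
  simp only [mem_Ioc, not_and, not_le] at hxb
  exact (hxb hax).le

theorem sum_integral_nat_intervals {E : Type*} [NormedAddCommGroup E] [NormedSpace ℝ E]
    {f : ℝ → E} (hf : ∀ k : ℕ, IntervalIntegrable f volume k (k + 1)) (N : ℕ) :
    ∑ k ∈ Finset.range N, ∫ x in (k : ℝ)..k + 1, f x = ∫ x in (0 : ℝ)..N, f x := by
  simpa using sum_integral_adjacent_intervals (a := Nat.cast) fun k _ => by simpa using hf k

theorem intervalIntegrable_of_abs_le_mul_sq_norm {E : Type*} [NormedAddCommGroup E]
    {φ : ℝ → E} (hφ : Continuous φ) {p W : ℝ → ℝ} {a b : ℝ}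
    (hp : IntervalIntegrable p volume a b) (hW : AEStronglyMeasurable W volume)
    (hWp : ∀ x, |W x| ≤ p x * ‖φ x‖ ^ 2) : IntervalIntegrable W volume a b := by
  refine (hp.mul_continuousOn (hφ.norm.pow 2).continuousOn).mono_fun hW.restrict
    (Filter.Eventually.of_forall fun x => ?_)
  simp only [Real.norm_eq_abs]
  exact (hWp x).trans (le_abs_self _)

section

variable {E : Type*} [NormedAddCommGroup E] [InnerProductSpace ℝ E] {φ : ℝ → E}

theorem ContDiff.sq_norm_sub_sq_norm_le (hφ : ContDiff ℝ 1 φ) {a x y : ℝ}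
    (hx : x ∈ Icc a (a + 1)) (hy : y ∈ Icc a (a + 1)) :
    ‖φ x‖ ^ 2 - ‖φ y‖ ^ 2 ≤ 2 * ∫ t in a..a + 1, ‖deriv φ t‖ * ‖φ t‖ := by
  have hφ' : Continuous (deriv φ) := hφ.continuous_deriv le_rfl
  have h_deriv (t : ℝ) :
      HasDerivAt (fun s => ‖φ s‖ ^ 2) (2 * ⟪φ t, deriv φ t⟫) t :=
    ((hφ.differentiable one_ne_zero) t).hasDerivAt.norm_sq
  have h_cont : Continuous fun t => 2 * ⟪φ t, deriv φ t⟫ :=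
    continuous_const.mul (hφ.continuous.inner hφ')
  have h_bound : Continuous fun t => 2 * (‖deriv φ t‖ * ‖φ t‖) :=
    continuous_const.mul (hφ'.norm.mul hφ.continuous.norm)
  rw [← integral_eq_sub_of_hasDerivAt (fun t _ => h_deriv t) (h_cont.intervalIntegrable y x),
    ← intervalIntegral.integral_const_mul]
  calc ∫ t in y..x, 2 * ⟪φ t, deriv φ t⟫
      ≤ ∫ t in uIoc y x, ‖2 * ⟪φ t, deriv φ t⟫‖ :=
        (Real.le_norm_self _).trans norm_integral_le_integral_norm_uIoc
    _ ≤ ∫ t in uIoc y x, 2 * (‖deriv φ t‖ * ‖φ t‖) := by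
        refine setIntegral_mono_on h_cont.norm.integrableOn_uIoc h_bound.integrableOn_uIoc
          measurableSet_uIoc fun t _ => ?_
        rw [norm_mul, Real.norm_two, mul_comm ‖deriv φ t‖]
        gcongr
        exact norm_inner_le_norm _ _
    _ ≤ ∫ t in Ioc a (a + 1), 2 * (‖deriv φ t‖ * ‖φ t‖) := by
        refine setIntegral_mono_set h_bound.integrableOn_Ioc
          (Filter.Eventually.of_forall fun t => by positivity)
          (Filter.Eventually.of_forall fun t ht => ?_)
        exact ⟨(le_min hy.1 hx.1).trans_lt ht.1, ht.2.trans (max_le hy.2 hx.2)⟩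
    _ = ∫ t in a..a + 1, 2 * (‖deriv φ t‖ * ‖φ t‖) := (integral_of_le (by linarith)).symm

theorem ContDiff.sq_norm_le_integral_add (hφ : ContDiff ℝ 1 φ) {a x : ℝ}
    (hx : x ∈ Icc a (a + 1)) :
    ‖φ x‖ ^ 2 ≤ (∫ t in a..a + 1, ‖φ t‖ ^ 2) + 2 * ∫ t in a..a + 1, ‖deriv φ t‖ * ‖φ t‖ := by
  -- average `‖φ x‖ ^ 2 - ‖φ y‖ ^ 2 ≤ 2 * ∫ ‖φ'‖ ‖φ‖` over `y ∈ [a, a + 1]`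
  have h_avg := integral_mono_on (g := fun t => ‖φ t‖ ^ 2) (le_add_of_nonneg_right zero_le_one)
    (intervalIntegrable_const (μ := volume))
    ((hφ.continuous.norm.pow 2).intervalIntegrable a (a + 1))
    fun y hy => sub_le_comm.1 (hφ.sq_norm_sub_sq_norm_le hx hy)
  rw [intervalIntegral.integral_const, add_sub_cancel_left, one_smul] at h_avg
  linarith

theorem ContDiff.neg_mul_le_integral_of_abs_le (hφ : ContDiff ℝ 1 φ) {p W : ℝ → ℝ} {a c : ℝ}
    (hp_nonneg : ∀ x, 0 ≤ p x) (hp : IntervalIntegrable p volume a (a + 1))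
    (hpc : ∫ x in a..a + 1, p x ≤ c) (hW : AEStronglyMeasurable W volume)
    (hWp : ∀ x, |W x| ≤ p x * ‖φ x‖ ^ 2) :
    -(c * ((∫ t in a..a + 1, ‖φ t‖ ^ 2) + 2 * ∫ t in a..a + 1, ‖deriv φ t‖ * ‖φ t‖))
      ≤ ∫ x in a..a + 1, W x := by
  set S := (∫ t in a..a + 1, ‖φ t‖ ^ 2) + 2 * ∫ t in a..a + 1, ‖deriv φ t‖ * ‖φ t‖
  have hab : a ≤ a + 1 := le_add_of_nonneg_right zero_le_one
  have hS : 0 ≤ S := (sq_nonneg _).trans (hφ.sq_norm_le_integral_add ⟨le_rfl, hab⟩)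
  have hW_int := intervalIntegrable_of_abs_le_mul_sq_norm hφ.continuous hp hW hWp
  calc -(c * S) ≤ -((∫ x in a..a + 1, p x) * S) := by gcongr
    _ = ∫ x in a..a + 1, -(p x * S) := by
        rw [intervalIntegral.integral_neg, intervalIntegral.integral_mul_const]
    _ ≤ ∫ x in a..a + 1, W x := by
        refine integral_mono_on hab (hp.mul_const S).neg hW_int fun x hx => ?_
        have := mul_le_mul_of_nonneg_left (hφ.sq_norm_le_integral_add hx) (hp_nonneg x)
        linarith [neg_abs_le (W x), hWp x]

theorem ContDiff.neg_mul_le_integral_zero_nat_of_abs_le (hφ : ContDiff ℝ 1 φ) {p W : ℝ → ℝ}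
    {c : ℝ} (hp_nonneg : ∀ x, 0 ≤ p x) (hp : ∀ k : ℕ, IntervalIntegrable p volume k (k + 1))
    (hpc : ∀ k : ℕ, ∫ x in (k : ℝ)..k + 1, p x ≤ c) (hW : AEStronglyMeasurable W volume)
    (hWp : ∀ x, |W x| ≤ p x * ‖φ x‖ ^ 2) (N : ℕ) :
    -(c * ((∫ t in (0 : ℝ)..N, ‖φ t‖ ^ 2) + 2 * ∫ t in (0 : ℝ)..N, ‖deriv φ t‖ * ‖φ t‖))
      ≤ ∫ x in (0 : ℝ)..N, W x := by
  have hφ' : Continuous (deriv φ) := hφ.continuous_deriv le_rfl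
  rw [← sum_integral_nat_intervals (f := fun t => ‖φ t‖ ^ 2)
      fun k => (hφ.continuous.norm.pow 2).intervalIntegrable _ _,
    ← sum_integral_nat_intervals (f := fun t => ‖deriv φ t‖ * ‖φ t‖)
      fun k => (hφ'.norm.mul hφ.continuous.norm).intervalIntegrable _ _,
    ← sum_integral_nat_intervals
      fun k => intervalIntegrable_of_abs_le_mul_sq_norm hφ.continuous (hp k) hW hWp,
    Finset.mul_sum, ← Finset.sum_add_distrib, Finset.mul_sum, ← Finset.sum_neg_distrib]
  exact Finset.sum_le_sum fun k _ =>
    hφ.neg_mul_le_integral_of_abs_le hp_nonneg (hp k) (hpc k) hW hWp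

theorem ContDiff.neg_mul_integral_le_integral_sq_norm_deriv_add (hφ : ContDiff ℝ 1 φ)
    {p W : ℝ → ℝ} {c : ℝ} (hp_nonneg : ∀ x, 0 ≤ p x)
    (hp : ∀ k : ℕ, IntervalIntegrable p volume k (k + 1))
    (hpc : ∀ k : ℕ, ∫ x in (k : ℝ)..k + 1, p x ≤ c) (hW : AEStronglyMeasurable W volume)
    (hWp : ∀ x, |W x| ≤ p x * ‖φ x‖ ^ 2) (N : ℕ) :
    -(c ^ 2 + c) * ∫ t in (0 : ℝ)..N, ‖φ t‖ ^ 2 ≤ ∫ t in (0 : ℝ)..N, (‖deriv φ t‖ ^ 2 + W t) := by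
  have hφ' : Continuous (deriv φ) := hφ.continuous_deriv le_rfl
  have h_sq : Continuous fun t => ‖φ t‖ ^ 2 := hφ.continuous.norm.pow 2
  have h_mul : Continuous fun t => ‖deriv φ t‖ * ‖φ t‖ := hφ'.norm.mul hφ.continuous.norm
  have h_deriv_sq : Continuous fun t => ‖deriv φ t‖ ^ 2 := hφ'.norm.pow 2
  have hW_int : IntervalIntegrable W volume 0 N := by
    simpa using IntervalIntegrable.trans_iterate (a := Nat.cast) (n := N) fun k _ => by
      simpa using intervalIntegrable_of_abs_le_mul_sq_norm hφ.continuous (hp k) hW hWp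
  have h_kinetic : 2 * c * (∫ t in (0 : ℝ)..N, ‖deriv φ t‖ * ‖φ t‖)
      - c ^ 2 * ∫ t in (0 : ℝ)..N, ‖φ t‖ ^ 2 ≤ ∫ t in (0 : ℝ)..N, ‖deriv φ t‖ ^ 2 := by
    rw [← intervalIntegral.integral_const_mul, ← intervalIntegral.integral_const_mul,
      ← intervalIntegral.integral_sub ((h_mul.const_mul _).intervalIntegrable _ _)
        ((h_sq.const_mul _).intervalIntegrable _ _)]
    refine integral_mono_on N.cast_nonneg
      (((h_mul.const_mul _).sub (h_sq.const_mul _)).intervalIntegrable _ _)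
      (h_deriv_sq.intervalIntegrable _ _) fun t _ => ?_
    nlinarith [sq_nonneg (‖deriv φ t‖ - c * ‖φ t‖)]
  rw [intervalIntegral.integral_add (h_deriv_sq.intervalIntegrable _ _) hW_int]
  linarith [hφ.neg_mul_le_integral_zero_nat_of_abs_le hp_nonneg hp hpc hW hWp N]

end

theorem quadratic_form_bounded_below_of_birman_general (n : ℕ)
    (v : ℝ → Matrix (Fin n) (Fin n) ℝ)
    (hv_meas : ∀ i j, Measurable fun x => v x i j)
    (c₀ : ℝ)
    (hv_int : ∀ x : ℝ, 0 ≤ x → IntervalIntegrable (fun z => ‖v z‖) volume x (x + 1))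
    (h_birman : ∀ x : ℝ, 0 ≤ x → ∫ z in x..(x + 1), ‖v z‖ ≤ c₀)
    (Λ₀ : ℝ) (hΛ₀ : Λ₀ = -(1 + c₀) ^ 2)
    (φ : ℝ → EuclideanSpace ℝ (Fin n))
    (hφ : ContDiff ℝ 1 φ)
    (hφ_supp : HasCompactSupport φ) :
    (∫ x in Set.Ioi (0 : ℝ), (‖deriv φ x‖ ^ 2 + (v x).mulVec (φ x) ⬝ᵥ (φ x)))
      ≥ Λ₀ * ∫ x in Set.Ioi (0 : ℝ), ‖φ x‖ ^ 2 := by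
  have hc₀ : 0 ≤ c₀ :=
    (intervalIntegral.integral_nonneg (by norm_num) fun z _ => norm_nonneg (v z)).trans
      (h_birman 0 le_rfl)
  obtain ⟨N, hφN, hφ'N⟩ :=
    (hφ_supp.eventually_forall_ge_eq_zero.and hφ_supp.deriv.eventually_forall_ge_eq_zero).exists
  have hφ_coord (j : Fin n) : Measurable fun x => φ x j :=
    ((EuclideanSpace.proj j).continuous.comp hφ.continuous).measurable
  have hW : Measurable fun x => v x *ᵥ φ x ⬝ᵥ φ x :=
    measurable_mulVec_dotProduct hv_meas hφ_coord hφ_coord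
  have h_bound := hφ.neg_mul_integral_le_integral_sq_norm_deriv_add (fun x => norm_nonneg (v x))
    (fun k => hv_int k k.cast_nonneg) (fun k => h_birman k k.cast_nonneg) hW.aestronglyMeasurable
    (fun x => by simpa [pow_two, mul_assoc] using abs_mulVec_dotProduct_le (v x) (φ x) (φ x)) N
  rw [setIntegral_Ioi_eq_intervalIntegral_of_forall_ge N.cast_nonneg fun x hx => by
      simp [hφN x hx, hφ'N x hx],
    setIntegral_Ioi_eq_intervalIntegral_of_forall_ge N.cast_nonneg fun x hx => by simp [hφN x hx],
    hΛ₀]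
  have h_mass : 0 ≤ ∫ t in (0 : ℝ)..N, ‖φ t‖ ^ 2 :=
    intervalIntegral.integral_nonneg N.cast_nonneg fun t _ => sq_nonneg _
  nlinarith

/-- under the Birman condition `∫_x^{x+1} ‖v‖ ≤ c₀` for all `x ≥ 0`, the
quadratic form of `H = -d²/dx² + v` on `[0, ∞)` is bounded below by `Λ₀ = -(1 + c₀)²`. -/
theorem quadratic_form_bounded_below_of_birman (n : ℕ) (hn : 1 ≤ n)
    (v : ℝ → Matrix (Fin n) (Fin n) ℝ)
    (hv_meas : ∀ i j, Measurable fun x => v x i j)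
    (hv_symm : ∀ x, (v x)ᵀ = v x)
    (c₀ : ℝ)
    (hv_int : ∀ x : ℝ, 0 ≤ x → IntervalIntegrable (fun z => ‖v z‖) volume x (x + 1))
    (h_birman : ∀ x : ℝ, 0 ≤ x → ∫ z in x..(x + 1), ‖v z‖ ≤ c₀)
    (Λ₀ : ℝ) (hΛ₀ : Λ₀ = -(1 + c₀) ^ 2)
    (φ : ℝ → EuclideanSpace ℝ (Fin n))
    (hφ : ContDiff ℝ 1 φ)
    (hφ_supp : HasCompactSupport φ)
    (hφ_pos : ∀ x < (0 : ℝ), φ x = 0) :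
    (∫ x in Set.Ioi (0 : ℝ), (‖deriv φ x‖ ^ 2 + (v x).mulVec (φ x) ⬝ᵥ (φ x)))
      ≥ Λ₀ * ∫ x in Set.Ioi (0 : ℝ), ‖φ x‖ ^ 2 :=
  quadratic_form_bounded_below_of_birman_general n v hv_meas c₀ hv_int h_birman Λ₀ hΛ₀ φ hφ hφ_supp
end

section
/- Let n ≥ 1, let v : ℝ → Mₙ(ℝ) be continuous with v(x) symmetric for every x and v(x) = 0 for x ∉ [0, s] (s > 0), let k > 0 and λ = k². Suppose w : ℝ → Mₙ(ℂ) is a twice differentiable solution of −w″(x) + v(x)w(x) = λ w(x) such that w(x) = e^{−ikx}·I for x < 0, and there exist matrices P, S ∈ Mₙ(ℂ) with w(x) = e^{ikx}·P + e^{−ikx}·S for x > s. Then the 'conservation of energy' identity holds: S*S − P*P = I, where * denotes the conjugate transpose. -/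
/-!
The Wronskian `W = wᴴ w' - w'ᴴ w` is constant: its derivative is `wᴴ w'' - w''ᴴ w`, which
vanishes because `w'' = (v - λ) w` with `v - λ` Hermitian (`v` real symmetric, `λ` real).
For a plane wave `e^{ikx} P + e^{-ikx} S` the Wronskian equals `2ik (Pᴴ P - Sᴴ S)`. Left of the
support of `v` the solution is the plane wave with `P = 0`, `S = 1`, so comparing the two sides
gives `-2ik = 2ik (Pᴴ P - Sᴴ S)`.
-/

open Matrix Filter Topology

section Wronskian

variable {m n : Type*} [Fintype m]

def wronskian (w w' : ℝ → Matrix m n ℂ) (x : ℝ) : Matrix n n ℂ :=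
  (w x)ᴴ * w' x - (w' x)ᴴ * w x

theorem Matrix.IsHermitian.conjTranspose_mul_mul_sub_eq_zero {A : Matrix m m ℂ}
    (hA : A.IsHermitian) (W : Matrix m n ℂ) : Wᴴ * (A * W) - (A * W)ᴴ * W = 0 := by
  rw [conjTranspose_mul, hA.eq, Matrix.mul_assoc, sub_self]

variable {w w' w'' : ℝ → Matrix m n ℂ}

theorem hasDerivAt_wronskian_apply (hw' : ∀ x i j, HasDerivAt (fun t => w t i j) (w' x i j) x)
    (hw'' : ∀ x i j, HasDerivAt (fun t => w' t i j) (w'' x i j) x) (x : ℝ) (i j : n) :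
    HasDerivAt (fun t => wronskian w w' t i j) (((w x)ᴴ * w'' x - (w'' x)ᴴ * w x) i j) x := by
  simp only [wronskian, Matrix.sub_apply, mul_apply, conjTranspose_apply]
  refine (HasDerivAt.fun_sum fun l _ => ((hw' x l i).star.fun_mul (hw'' x l j))).fun_sub
    (HasDerivAt.fun_sum fun l _ => ((hw'' x l i).star.fun_mul (hw' x l j))) |>.congr_deriv ?_
  simp only [← Finset.sum_sub_distrib]
  exact Finset.sum_congr rfl fun l _ => by ring

theorem wronskian_eq_of_isHermitian {A : ℝ → Matrix m m ℂ} (hA : ∀ x, (A x).IsHermitian)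
    (hw' : ∀ x i j, HasDerivAt (fun t => w t i j) (w' x i j) x)
    (hw'' : ∀ x i j, HasDerivAt (fun t => w' t i j) (w'' x i j) x)
    (hw_eq : ∀ x, w'' x = A x * w x) (x y : ℝ) : wronskian w w' x = wronskian w w' y := by
  ext i j
  have hderiv (t : ℝ) : HasDerivAt (fun t => wronskian w w' t i j) 0 t := by
    have h := hasDerivAt_wronskian_apply hw' hw'' t i j
    rwa [hw_eq, (hA t).conjTranspose_mul_mul_sub_eq_zero, Matrix.zero_apply] at h
  exact is_const_of_deriv_eq_zero (fun t => (hderiv t).differentiableAt)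
    (fun t => (hderiv t).deriv) x y

end Wronskian

section PlaneWave

variable {m n : Type*}

theorem hasDerivAt_cexp_mul_ofReal (c : ℂ) (x : ℝ) :
    HasDerivAt (fun t : ℝ => Complex.exp (c * t)) (c * Complex.exp (c * x)) x := by
  simpa [mul_comm] using (((hasDerivAt_id x).ofReal_comp).const_mul c).cexp

theorem conjTranspose_mul_sub_conjTranspose_mul_planeWave [Fintype m] {c : ℂ}
    (hc : star c = -c) (e : ℂ) (P S : Matrix m n ℂ) :
    (e • P + star e • S)ᴴ * (c • (e • P - star e • S))
      - (c • (e • P - star e • S))ᴴ * (e • P + star e • S)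
      = (2 * c * (star e * e)) • (Pᴴ * P - Sᴴ * S) := by
  simp only [conjTranspose_add, conjTranspose_sub, conjTranspose_smul, hc, star_star,
    Matrix.add_mul, Matrix.mul_add, Matrix.sub_mul, Matrix.mul_sub, Matrix.smul_mul,
    Matrix.mul_smul, smul_smul]
  module

noncomputable def planeWave (c : ℂ) (P S : Matrix m n ℂ) (t : ℝ) : Matrix m n ℂ :=
  Complex.exp (c * t) • P + Complex.exp (-(c * t)) • S

theorem hasDerivAt_planeWave_apply (c : ℂ) (P S : Matrix m n ℂ) (x : ℝ) (i : m) (j : n) :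
    HasDerivAt (fun t => planeWave c P S t i j)
      ((c • (Complex.exp (c * x) • P - Complex.exp (-(c * x)) • S)) i j) x := by
  simp only [planeWave, Matrix.add_apply, Matrix.sub_apply, Matrix.smul_apply, smul_eq_mul]
  have h := ((hasDerivAt_cexp_mul_ofReal c x).mul_const (P i j)).fun_add
    ((hasDerivAt_cexp_mul_ofReal (-c) x).mul_const (S i j))
  simp only [neg_mul] at h
  exact h.congr_deriv (by ring)

theorem derivative_eq_of_eventuallyEq_planeWave {w w' : ℝ → Matrix m n ℂ} {c : ℂ}
    {P S : Matrix m n ℂ} {x : ℝ} (hw' : ∀ i j, HasDerivAt (fun t => w t i j) (w' x i j) x)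
    (hw : w =ᶠ[𝓝 x] planeWave c P S) :
    w' x = c • (Complex.exp (c * x) • P - Complex.exp (-(c * x)) • S) := by
  ext i j
  exact (hw' i j).unique <| (hasDerivAt_planeWave_apply c P S x i j).congr_of_eventuallyEq <|
    hw.mono fun t ht => by simp only [ht]

theorem star_cexp_I_mul (k x : ℝ) :
    star (Complex.exp (Complex.I * k * x)) = Complex.exp (-(Complex.I * k * x)) := by
  rw [Complex.star_def, ← Complex.exp_conj]
  simp

theorem wronskian_eq_of_eventuallyEq_planeWave [Fintype m] {w w' : ℝ → Matrix m n ℂ}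
    {k x : ℝ} {P S : Matrix m n ℂ} (hw' : ∀ i j, HasDerivAt (fun t => w t i j) (w' x i j) x)
    (hw : w =ᶠ[𝓝 x] planeWave (Complex.I * k) P S) :
    wronskian w w' x = (2 * Complex.I * k) • (Pᴴ * P - Sᴴ * S) := by
  have hc : star (Complex.I * k) = -(Complex.I * k) := by simp
  have he : star (Complex.exp (Complex.I * k * x)) * Complex.exp (Complex.I * k * x) = 1 := by
    rw [star_cexp_I_mul, ← Complex.exp_add, neg_add_cancel, Complex.exp_zero]
  rw [wronskian, derivative_eq_of_eventuallyEq_planeWave hw' hw, hw.self_of_nhds, planeWave,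
    ← star_cexp_I_mul, conjTranspose_mul_sub_conjTranspose_mul_planeWave hc, he]
  ring_nf

end PlaneWave

theorem conservation_of_energy_general (n : ℕ)
    (s : ℝ)
    (v : ℝ → Matrix (Fin n) (Fin n) ℝ)
    (hv_symm : ∀ x, (v x)ᵀ = v x)
    (k : ℝ) (hk : 0 < k) (lam : ℂ) (hlam : lam = (k : ℂ) ^ 2)
    (w w' w'' : ℝ → Matrix (Fin n) (Fin n) ℂ)
    (hw' : ∀ x i j, HasDerivAt (fun t => w t i j) (w' x i j) x)
    (hw'' : ∀ x i j, HasDerivAt (fun t => w' t i j) (w'' x i j) x)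
    (hw_eq : ∀ x, -w'' x + ((v x).map (Complex.ofReal)) * w x = lam • w x)
    (hw_neg : ∀ x < (0 : ℝ),
      w x = Complex.exp (-(Complex.I * k * x)) • (1 : Matrix (Fin n) (Fin n) ℂ))
    (P S : Matrix (Fin n) (Fin n) ℂ)
    (hw_pos : ∀ x : ℝ, s < x →
      w x = Complex.exp (Complex.I * k * x) • P + Complex.exp (-(Complex.I * k * x)) • S) :
    Sᴴ * S - Pᴴ * P = 1 := by
  set A : ℝ → Matrix (Fin n) (Fin n) ℂ := fun x => (v x).map Complex.ofReal - lam • 1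
  have hA (x : ℝ) : (A x).IsHermitian := by
    have hlam_real : IsSelfAdjoint lam := by
      rw [hlam, ← Complex.ofReal_pow]
      exact Complex.conj_ofReal _
    have hv_herm : (v x).IsHermitian := isHermitian_iff_isSymm.mpr (hv_symm x)
    exact (hv_herm.map _ fun r => (Complex.conj_ofReal r).symm).sub (isHermitian_one.smul hlam_real)
  have hw''_eq (x : ℝ) : w'' x = A x * w x := by
    rw [Matrix.sub_mul, smul_mul, Matrix.one_mul, ← hw_eq x]
    abel
  have hleft : wronskian w w' (-1) = (2 * Complex.I * k) • (0ᴴ * 0 - 1ᴴ * 1) :=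
    wronskian_eq_of_eventuallyEq_planeWave (hw' (-1)) <|
      eventually_of_mem (Iio_mem_nhds (by norm_num : (-1 : ℝ) < 0)) fun x hx => by
        simp [planeWave, hw_neg x hx]
  have hright : wronskian w w' (s + 1) = (2 * Complex.I * k) • (Pᴴ * P - Sᴴ * S) :=
    wronskian_eq_of_eventuallyEq_planeWave (hw' (s + 1)) <|
      eventually_of_mem (Ioi_mem_nhds (lt_add_one s)) fun x hx => hw_pos x hx
  have hk' : (2 * Complex.I * k) ≠ 0 := by simp [hk.ne']
  have h := wronskian_eq_of_isHermitian hA hw' hw'' hw''_eq (-1) (s + 1)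
  rw [hleft, hright, smul_right_injective _ hk' |>.eq_iff] at h
  rw [← neg_sub, ← h]
  simp

/-- "conservation of energy" for the scattering solution: if
`-w'' + v w = k² w` with `w(x) = e^{-ikx} I` for `x < 0` and
`w(x) = e^{ikx} P + e^{-ikx} S` for `x > s`, then `S*S - P*P = I`. -/
theorem conservation_of_energy (n : ℕ) (hn : 1 ≤ n)
    (s : ℝ) (hs : 0 < s)
    (v : ℝ → Matrix (Fin n) (Fin n) ℝ)
    (hv_cont : ∀ i j, Continuous fun x => v x i j)
    (hv_symm : ∀ x, (v x)ᵀ = v x)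
    (hv_supp : ∀ x, x ∉ Set.Icc 0 s → v x = 0)
    (k : ℝ) (hk : 0 < k) (lam : ℂ) (hlam : lam = (k : ℂ) ^ 2)
    (w w' w'' : ℝ → Matrix (Fin n) (Fin n) ℂ)
    (hw' : ∀ x i j, HasDerivAt (fun t => w t i j) (w' x i j) x)
    (hw'' : ∀ x i j, HasDerivAt (fun t => w' t i j) (w'' x i j) x)
    (hw_eq : ∀ x, -w'' x + ((v x).map (Complex.ofReal)) * w x = lam • w x)
    (hw_neg : ∀ x < (0 : ℝ),
      w x = Complex.exp (-(Complex.I * k * x)) • (1 : Matrix (Fin n) (Fin n) ℂ))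
    (P S : Matrix (Fin n) (Fin n) ℂ)
    (hw_pos : ∀ x : ℝ, s < x →
      w x = Complex.exp (Complex.I * k * x) • P + Complex.exp (-(Complex.I * k * x)) • S) :
    Sᴴ * S - Pᴴ * P = 1 :=
  conservation_of_energy_general n s v hv_symm k hk lam hlam w w' w'' hw' hw'' hw_eq hw_neg P S
    hw_pos
end

section
/- Let n ≥ 1, let Q : ℝ → Mₙ(ℂ) be continuous, and let z : ℝ → Mₙ(ℂ) be differentiable with z′(x) = Q(x)·z(x) for all x. Then (Liouville's formula) for every x, det z(x) = det z(0) · exp( ∫₀ˣ tr Q(t) dt ); in particular the function x ↦ det z(x) satisfies the scalar ODE y′ = (tr Q(x))·y. -/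
/-!
Differentiating the Leibniz expansion of the determinant term by term gives Jacobi's formula
`(det z)' = ∑ⱼ det (z with its column j replaced by column j of z')`. When `z' = Q z`, Cramer's
rule identifies the `j`-th summand with `(adj z * (Q * z)) j j`, so the sum is
`tr (adj z * Q * z) = tr (z * adj z * Q) = tr Q * det z`. The scalar equation `y' = a y` then
integrates because `y * exp (-∫ a)` has derivative zero.
-/

open Matrix Finset

namespace Matrix

variable {ι R : Type*} [Fintype ι] [DecidableEq ι]

theorem det_updateCol_eq_sum [CommRing R] (A : Matrix ι ι R) (j : ι) (c : ι → R) :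
    (A.updateCol j c).det =
      ∑ σ : Equiv.Perm ι, Equiv.Perm.sign σ • ((∏ i ∈ univ.erase j, A (σ i) i) * c (σ j)) := by
  rw [det_apply]
  refine sum_congr rfl fun σ _ => ?_
  rw [← mul_prod_erase univ _ (mem_univ j), mul_comm, updateCol_self]
  congr 2
  exact prod_congr rfl fun i hi => updateCol_ne (ne_of_mem_erase hi)

theorem sum_det_updateCol_mul [CommRing R] (Q A : Matrix ι ι R) :
    ∑ j, (A.updateCol j fun i => (Q * A) i j).det = Q.trace * A.det := by
  have hcramer : ∀ j, (A.updateCol j fun i => (Q * A) i j).det = (A.adjugate * (Q * A)) j j :=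
    fun j => by
      rw [← cramer_apply, cramer_eq_adjugate_mulVec]
      rfl
  calc ∑ j, (A.updateCol j fun i => (Q * A) i j).det = (A.adjugate * (Q * A)).trace :=
        sum_congr rfl fun j _ => hcramer j
    _ = (A * A.adjugate * Q).trace := by rw [← Matrix.mul_assoc, trace_mul_cycle]
    _ = Q.trace * A.det := by
      rw [mul_adjugate, smul_mul, Matrix.one_mul, trace_smul, smul_eq_mul, mul_comm]

variable {𝕜 𝔸 : Type*} [NontriviallyNormedField 𝕜] [NormedCommRing 𝔸] [NormedAlgebra 𝕜 𝔸]

theorem hasDerivAt_det {z : 𝕜 → Matrix ι ι 𝔸} {z' : Matrix ι ι 𝔸} {x : 𝕜}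
    (hz : ∀ i j, HasDerivAt (fun t => z t i j) (z' i j) x) :
    HasDerivAt (fun t => (z t).det) (∑ j, ((z x).updateCol j fun i => z' i j).det) x := by
  have hterm : ∀ σ : Equiv.Perm ι, HasDerivAt (fun t => Equiv.Perm.sign σ • ∏ i, z t (σ i) i)
      (Equiv.Perm.sign σ • ∑ j, (∏ i ∈ univ.erase j, z x (σ i) i) * z' (σ j) j) x :=
    fun σ => (HasDerivAt.fun_finsetProd fun i _ => hz (σ i) i).const_smul _
  simp_rw [det_updateCol_eq_sum, det_apply]
  rw [sum_comm]
  simpa only [smul_sum] using HasDerivAt.fun_sum fun σ _ => hterm σ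

end Matrix

theorem Continuous.eq_mul_exp_integral_of_hasDerivAt {a y : ℝ → ℂ} (ha : Continuous a)
    (hy : ∀ x, HasDerivAt y (a x * y x) x) (x₀ x : ℝ) :
    y x = y x₀ * Complex.exp (∫ t in x₀..x, a t) := by
  set I : ℝ → ℂ := fun x => ∫ t in x₀..x, a t
  have hI : ∀ x, HasDerivAt I (a x) x := fun x =>
    intervalIntegral.integral_hasDerivAt_right (ha.intervalIntegrable _ _)
      (ha.stronglyMeasurableAtFilter _ _) ha.continuousAt
  have hg : ∀ x, HasDerivAt (fun t => y t * Complex.exp (-I t)) 0 x := fun x =>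
    ((hy x).fun_mul (hI x).fun_neg.cexp).congr_deriv (by ring)
  have hconst : y x * Complex.exp (-I x) = y x₀ * Complex.exp (-I x₀) :=
    is_const_of_deriv_eq_zero (fun t => (hg t).differentiableAt) (fun t => (hg t).deriv) x x₀
  have hI₀ : I x₀ = 0 := intervalIntegral.integral_same
  rw [hI₀, neg_zero, Complex.exp_zero, mul_one] at hconst
  calc y x = y x * Complex.exp (-I x) * Complex.exp (I x) := by
        rw [mul_assoc, ← Complex.exp_add, neg_add_cancel, Complex.exp_zero, mul_one]
    _ = y x₀ * Complex.exp (I x) := by rw [hconst]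

theorem liouville_formula_general (n : ℕ)
    (Q : ℝ → Matrix (Fin n) (Fin n) ℂ)
    (hQ_cont : ∀ i j, Continuous fun x => Q x i j)
    (z z' : ℝ → Matrix (Fin n) (Fin n) ℂ)
    (hz' : ∀ x i j, HasDerivAt (fun t => z t i j) (z' x i j) x)
    (hODE : ∀ x, z' x = Q x * z x) :
    (∀ x : ℝ, (z x).det = (z 0).det * Complex.exp (∫ t in (0 : ℝ)..x, (Q t).trace)) ∧
      ∀ x : ℝ, HasDerivAt (fun t => (z t).det) ((Q x).trace * (z x).det) x := by
  have hdet : ∀ x, HasDerivAt (fun t => (z t).det) ((Q x).trace * (z x).det) x := fun x => by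
    simpa only [hODE, sum_det_updateCol_mul] using hasDerivAt_det (hz' x)
  have htrace : Continuous fun t => (Q t).trace := continuous_finsetSum _ fun i _ => hQ_cont i i
  exact ⟨htrace.eq_mul_exp_integral_of_hasDerivAt hdet 0, hdet⟩

/-- Liouville's formula: if `z' = Q z`, then
`det z(x) = det z(0) · exp(∫₀ˣ tr Q)`; in particular `y = det z` solves `y' = (tr Q) y`. -/
theorem liouville_formula (n : ℕ) (hn : 1 ≤ n)
    (Q : ℝ → Matrix (Fin n) (Fin n) ℂ)
    (hQ_cont : ∀ i j, Continuous fun x => Q x i j)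
    (z z' : ℝ → Matrix (Fin n) (Fin n) ℂ)
    (hz' : ∀ x i j, HasDerivAt (fun t => z t i j) (z' x i j) x)
    (hODE : ∀ x, z' x = Q x * z x) :
    (∀ x : ℝ, (z x).det = (z 0).det * Complex.exp (∫ t in (0 : ℝ)..x, (Q t).trace)) ∧
      ∀ x : ℝ, HasDerivAt (fun t => (z t).det) ((Q x).trace * (z x).det) x :=
  liouville_formula_general n Q hQ_cont z z' hz' hODE
end
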